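/- arXiv:2208.03751 — 2 statements merged into one kernel-verified Lean document; each statement's English description precedes it below -/
import Mathlib

section
/- Let R be a commutative ring such that the essential annihilating-ideal graph EG(R) has finite clique number and Z(R) = Nil(R). Then Nil(R) is a finitely generated (hence nilpotent) ideal. -/
/-- An ideal is essential if it intersects every nonzero ideal nontrivially. -/
def IsEssentialIdeal (R : Type*) [CommRing R] (E : Ideal R) : Prop :=
  ∀ J : Ideal R, J ≠ ⊥ → E ⊓ J ≠ ⊥

/-- Vertices of the essential annihilating-ideal graph: nonzero ideals with
nonzero annihilator. -/
def AnnVertex (R : Type*) [CommRing R] : Type _ :=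
  {I : Ideal R // I ≠ ⊥ ∧ Submodule.annihilator I ≠ ⊥}

/-- The essential annihilating-ideal graph `EG(R)`. -/
def EG (R : Type*) [CommRing R] : SimpleGraph (AnnVertex R) where
  Adj I J := I ≠ J ∧ IsEssentialIdeal R (Submodule.annihilator (I.1 * J.1))
  symm := by
    constructor
    intro I J h
    refine ⟨h.1.symm, ?_⟩
    rw [mul_comm]
    exact h.2
  loopless := by constructor; intro I h; exact h.1 rfl

/-!
The annihilator of a nilpotent ideal is essential, so any two distinct nonzero nilpotent ideals
are adjacent in `EG R`. In particular the nonzero principal ideals generated by nilpotent elements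
form a clique, which the bound on the clique number makes finite; one generator for each of them
gives a finite generating set of the nilradical.
-/

namespace Ideal

variable {R : Type*} [CommRing R]

lemma exists_mul_pow_ne_bot_and_mul_pow_succ_eq_bot {I J : Ideal R} (hI : IsNilpotent I)
    (hJ : J ≠ ⊥) : ∃ m : ℕ, J * I ^ m ≠ ⊥ ∧ J * I ^ (m + 1) = ⊥ := by
  by_contra! h
  obtain ⟨n, hn⟩ := hI
  have hne : ∀ m : ℕ, J * I ^ m ≠ ⊥ := fun m => by
    induction m with
    | zero => simpa using hJ
    | succ m ih => exact h m ih
  exact hne n (by rw [hn, Submodule.zero_eq_bot, mul_bot])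

lemma isEssentialIdeal_annihilator_of_isNilpotent {I : Ideal R} (hI : IsNilpotent I) :
    IsEssentialIdeal R (Submodule.annihilator I) := by
  intro J hJ
  -- the last nonzero product `J * I ^ m` lies in `J` and is killed by `I`
  obtain ⟨m, hne, hkill⟩ := exists_mul_pow_ne_bot_and_mul_pow_succ_eq_bot hI hJ
  refine ne_bot_of_le_ne_bot hne (le_inf ?_ mul_le_left)
  rw [Submodule.le_annihilator_iff, smul_eq_mul, mul_assoc, ← pow_succ, hkill]

lemma annihilator_ne_bot_of_isNilpotent {I : Ideal R} (hI : IsNilpotent I) (hI0 : I ≠ ⊥) :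
    Submodule.annihilator I ≠ ⊥ :=
  ne_bot_of_le_ne_bot (isEssentialIdeal_annihilator_of_isNilpotent hI I hI0) inf_le_left

lemma isNilpotent_span_singleton {x : R} (hx : IsNilpotent x) : IsNilpotent (span {x}) := by
  obtain ⟨n, hn⟩ := hx
  exact ⟨n, by simp [span_singleton_pow, hn]⟩

end Ideal

lemma Submodule.fg_of_finite_image_span_singleton {R M : Type*} [Semiring R] [AddCommMonoid M]
    [Module R M] (N : Submodule R M) (h : ((fun x => R ∙ x) '' (N : Set M)).Finite) : N.FG := by
  obtain ⟨s, hsN, hbij⟩ := Set.exists_subset_bijOn (N : Set M) (fun x => R ∙ x)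
  refine ⟨(h.subset hbij.image_eq.le |>.of_finite_image hbij.injOn).toFinset, ?_⟩
  rw [Set.Finite.coe_toFinset]
  refine le_antisymm (span_le.mpr hsN) fun x hx => ?_
  obtain ⟨y, hys, hxy⟩ := hbij.surjOn ⟨x, hx, rfl⟩
  have hx' : x ∈ R ∙ y := by
    rw [show (R ∙ y) = R ∙ x from hxy]
    exact mem_span_singleton_self x
  exact span_mono (Set.singleton_subset_iff.mpr hys) hx'

lemma SimpleGraph.IsClique.finite_of_forall_card_le {V : Type*} {G : SimpleGraph V} {n : ℕ}
    (hn : ∀ s : Finset V, G.IsClique s → s.card ≤ n) {C : Set V} (hC : G.IsClique C) :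
    C.Finite := by
  by_contra hinf
  obtain ⟨t, htC, ht⟩ := Set.Infinite.exists_subset_card_eq hinf (n + 1)
  have := hn t (hC.subset htC)
  omega

section EG

variable {R : Type*} [CommRing R]

def AnnVertex.ofIsNilpotent (I : Ideal R) (hI : IsNilpotent I) (hI0 : I ≠ ⊥) : AnnVertex R :=
  ⟨I, hI0, Ideal.annihilator_ne_bot_of_isNilpotent hI hI0⟩

lemma EG_adj_of_isNilpotent {u v : AnnVertex R} (hu : IsNilpotent u.1) (huv : u ≠ v) :
    (EG R).Adj u v :=
  ⟨huv, Ideal.isEssentialIdeal_annihilator_of_isNilpotent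
    ((Commute.all _ _).isNilpotent_mul_right hu)⟩

lemma EG_isClique_setOf_isNilpotent : (EG R).IsClique {v : AnnVertex R | IsNilpotent v.1} :=
  fun _ hu _ _ huv => EG_adj_of_isNilpotent hu huv

lemma finite_image_span_singleton_nilradical
    (hclique : ∃ n : ℕ, ∀ s : Finset (AnnVertex R), (EG R).IsClique ↑s → s.card ≤ n) :
    ((fun x : R => Ideal.span {x}) '' nilradical R).Finite := by
  obtain ⟨n, hn⟩ := hclique
  have hfin := EG_isClique_setOf_isNilpotent.finite_of_forall_card_le hn
  refine ((hfin.image Subtype.val).insert ⊥).subset ?_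
  rintro _ ⟨x, hx, rfl⟩
  by_cases hx0 : Ideal.span {x} = ⊥
  · exact Or.inl hx0
  · exact Or.inr ⟨AnnVertex.ofIsNilpotent _ (Ideal.isNilpotent_span_singleton hx) hx0,
      Ideal.isNilpotent_span_singleton hx, rfl⟩

end EG

theorem nilradical_fg_of_finite_clique_and_zeroDivisors_eq_nilradical_general
    {R : Type*} [CommRing R]
    (hclique : ∃ n : ℕ, ∀ s : Finset (AnnVertex R), (EG R).IsClique ↑s → s.card ≤ n) :
    (nilradical R).FG :=
  Submodule.fg_of_finite_image_span_singleton _ (finite_image_span_singleton_nilradical hclique)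

theorem nilradical_fg_of_finite_clique_and_zeroDivisors_eq_nilradical
    {R : Type*} [CommRing R]
    (hclique : ∃ n : ℕ, ∀ s : Finset (AnnVertex R), (EG R).IsClique ↑s → s.card ≤ n)
    (hZ : {x : R | ∃ y : R, y ≠ 0 ∧ x * y = 0} = {x : R | IsNilpotent x}) :
    (nilradical R).FG :=
  nilradical_fg_of_finite_clique_and_zeroDivisors_eq_nilradical_general hclique
end

section
/- Let R = R_1 × R_2 where each R_i is an Artinian local ring with exactly t_i ≥ 2 proper ideals (including (0)), t_1 and t_2 even. Then EG(R) is overfull, i.e., |E(EG(R))| > ⌊|V(EG(R))|/2⌋ · Δ(EG(R)), if and only if t_1 = t_2 = 2. -/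
section CommRing

variable {R : Type*} [CommRing R]

theorem annihilator_top_eq_bot : Submodule.annihilator (⊤ : Ideal R) = ⊥ := by
  rw [Submodule.annihilator_top, Module.annihilator_eq_bot]
  infer_instance

theorem isEssentialIdeal_annihilator_of_isNilpotent {K : Ideal R} (hK : IsNilpotent K) :
    IsEssentialIdeal R (Submodule.annihilator K) := by
  classical
  intro J hJ
  have hex : ∃ j, J * K ^ j = ⊥ := hK.imp fun k hk => by rw [hk, mul_zero, Ideal.zero_eq_bot]
  have hj : Nat.find hex ≠ 0 := fun h => hJ (by simpa [h] using Nat.find_spec hex)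
  -- for the least `j` with `J * K ^ j = ⊥`, the ideal `J * K ^ (j - 1)` is nonzero, lies in `J`,
  -- and is killed by `K`
  refine ne_bot_of_le_ne_bot (Nat.find_min hex (Nat.sub_one_lt hj)) (le_inf ?_ Ideal.mul_le_left)
  rw [Submodule.le_annihilator_iff, smul_eq_mul, mul_assoc, ← pow_succ,
    Nat.sub_one_add_one hj]
  exact Nat.find_spec hex

end CommRing

section ArtinianLocal

variable {R : Type*} [CommRing R] [IsArtinianRing R] [IsLocalRing R]

theorem isNilpotent_of_ne_top {K : Ideal R} (hK : K ≠ ⊤) : IsNilpotent K := by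
  obtain ⟨k, hk⟩ : IsNilpotent (IsLocalRing.maximalIdeal R) := by
    rw [← IsLocalRing.jacobson_eq_maximalIdeal ⊥ bot_ne_top]
    exact IsArtinianRing.isNilpotent_jacobson_bot
  refine ⟨k, le_bot_iff.mp ?_⟩
  rw [← Ideal.zero_eq_bot, ← hk]
  exact Ideal.pow_right_mono (IsLocalRing.le_maximalIdeal hK) k

theorem isEssentialIdeal_annihilator_iff {K : Ideal R} :
    IsEssentialIdeal R (Submodule.annihilator K) ↔ K ≠ ⊤ := by
  refine ⟨?_, fun hK => isEssentialIdeal_annihilator_of_isNilpotent (isNilpotent_of_ne_top hK)⟩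
  rintro h rfl
  exact h ⊤ top_ne_bot (by rw [annihilator_top_eq_bot, bot_inf_eq])

theorem annihilator_ne_bot_iff {I : Ideal R} : Submodule.annihilator I ≠ ⊥ ↔ I ≠ ⊤ := by
  refine ⟨fun h hI => h (hI ▸ annihilator_top_eq_bot), fun hI => ?_⟩
  simpa using isEssentialIdeal_annihilator_iff.mpr hI ⊤ top_ne_bot

end ArtinianLocal

namespace Ideal

section Semiring

variable {R : Type*} [Semiring R]

theorem compl_setOf_ne_top : {I : Ideal R | I ≠ ⊤}ᶜ = {⊤} := by
  ext
  simp

theorem finite_of_ncard_setOf_ne_top_ne_zero (h : {I : Ideal R | I ≠ ⊤}.ncard ≠ 0) :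
    Finite (Ideal R) := by
  rw [← Set.finite_univ_iff, ← Set.union_compl_self {I : Ideal R | I ≠ ⊤}, compl_setOf_ne_top]
  exact (Set.finite_of_ncard_ne_zero h).union (Set.finite_singleton ⊤)

theorem natCard_eq_ncard_setOf_ne_top_add_one [Finite (Ideal R)] :
    Nat.card (Ideal R) = {I : Ideal R | I ≠ ⊤}.ncard + 1 := by
  rw [← Set.ncard_add_ncard_compl {I : Ideal R | I ≠ ⊤}, compl_setOf_ne_top, Set.ncard_singleton]

end Semiring

variable {R S : Type*} [CommRing R] [CommRing S]

theorem mul_eq_top_iff {I J : Ideal R} : I * J = ⊤ ↔ I = ⊤ ∧ J = ⊤ :=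
  ⟨fun h => ⟨top_le_iff.mp (h ▸ mul_le_left), top_le_iff.mp (h ▸ mul_le_right)⟩,
    fun ⟨hI, hJ⟩ => by rw [hI, hJ, top_mul]⟩

theorem prod_mul_prod (I₁ J₁ : Ideal R) (I₂ J₂ : Ideal S) :
    prod I₁ I₂ * prod J₁ J₂ = prod (I₁ * J₁) (I₂ * J₂) := by
  rw [ideal_prod_eq (prod I₁ I₂ * prod J₁ J₂), Ideal.map_mul, Ideal.map_mul]
  simp only [map_fst_prod, map_snd_prod]

theorem prod_inf_prod (I₁ J₁ : Ideal R) (I₂ J₂ : Ideal S) :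
    prod I₁ I₂ ⊓ prod J₁ J₂ = prod (I₁ ⊓ J₁) (I₂ ⊓ J₂) := by
  ext
  simp only [mem_inf, mem_prod]
  tauto

theorem annihilator_prod (I : Ideal R) (J : Ideal S) :
    Submodule.annihilator (prod I J) =
      prod (Submodule.annihilator I) (Submodule.annihilator J) := by
  ext ⟨x, y⟩
  simp only [mem_prod, Submodule.mem_annihilator, Prod.forall, smul_eq_mul, Prod.mk_mul_mk,
    Prod.mk_eq_zero]
  exact ⟨fun h => ⟨fun a ha => (h a 0 ⟨ha, J.zero_mem⟩).1,
    fun b hb => (h 0 b ⟨I.zero_mem, hb⟩).2⟩, fun h a b hab => ⟨h.1 a hab.1, h.2 b hab.2⟩⟩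

end Ideal

theorem isEssentialIdeal_prod_iff {R S : Type*} [CommRing R] [CommRing S] {E : Ideal R}
    {F : Ideal S} :
    IsEssentialIdeal (R × S) (E.prod F) ↔ IsEssentialIdeal R E ∧ IsEssentialIdeal S F := by
  refine ⟨fun h => ⟨fun J hJ => ?_, fun J hJ => ?_⟩, fun ⟨hE, hF⟩ J hJ => ?_⟩
  · simpa [Ideal.prod_inf_prod] using h (J.prod ⊥) (by simpa using hJ)
  · simpa [Ideal.prod_inf_prod] using h (Ideal.prod ⊥ J) (by simpa using hJ)
  · rw [Ideal.ideal_prod_eq J, Ne, Ideal.prod_eq_bot_iff, not_and_or] at hJ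
    rw [Ideal.ideal_prod_eq J, Ideal.prod_inf_prod, Ne, Ideal.prod_eq_bot_iff, not_and_or]
    exact hJ.imp (hE _) (hF _)

theorem annihilator_prod_ne_bot_iff {R₁ R₂ : Type*} [CommRing R₁] [CommRing R₂]
    [IsArtinianRing R₁] [IsLocalRing R₁] [IsArtinianRing R₂] [IsLocalRing R₂]
    (I₁ : Ideal R₁) (I₂ : Ideal R₂) :
    Submodule.annihilator (I₁.prod I₂) ≠ ⊥ ↔ (I₁, I₂) ≠ (⊤, ⊤) := by
  rw [Ideal.annihilator_prod, Ne, Ideal.prod_eq_bot_iff, not_and_or, ← Ne, ← Ne,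
    annihilator_ne_bot_iff, annihilator_ne_bot_iff]
  simp only [ne_eq, Prod.mk.injEq, not_and_or]

namespace SimpleGraph

variable {V : Type*} {G : SimpleGraph V}

theorem sum_ncard_neighborSet [Fintype V] (G : SimpleGraph V) :
    ∑ v, (G.neighborSet v).ncard = 2 * G.edgeSet.ncard := by
  classical
  simp only [Set.ncard_eq_toFinset_card', Set.toFinset_card, card_neighborSet_eq_degree]
  rw [sum_degrees_eq_twice_card_edges, ← edgeFinset_card]

theorem ncard_neighborSet_le [Finite V] (G : SimpleGraph V) (v : V) :
    (G.neighborSet v).ncard ≤ Nat.card V - 1 := by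
  have := Set.ncard_le_ncard (t := {v}ᶜ) fun w (hw : G.Adj v w) => (G.ne_of_adj hw).symm
  rwa [Set.ncard_compl, Set.ncard_singleton] at this

theorem IsUniversal.ncard_neighborSet [Finite V] {v : V} (hv : G.IsUniversal v) :
    (G.neighborSet v).ncard = Nat.card V - 1 := by
  rw [hv.neighborSet_eq, Set.ncard_compl, Set.ncard_singleton]

theorem eq_natCard_sub_one_of_isUniversal [Finite V] {d : ℕ}
    (hdle : ∀ v, (G.neighborSet v).ncard ≤ d) (hdeq : ∃ v, (G.neighborSet v).ncard = d)
    {u : V} (hu : G.IsUniversal u) : d = Nat.card V - 1 := by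
  obtain ⟨v, rfl⟩ := hdeq
  exact (G.ncard_neighborSet_le v).antisymm (hu.ncard_neighborSet ▸ hdle u)

section TwoCliqueComplement

variable {A B : Set V}

theorem neighborSet_eq_compl_of_mem_left
    (hadj : ∀ v w, G.Adj v w ↔ v ≠ w ∧ ¬(v ∈ A ∧ w ∈ A) ∧ ¬(v ∈ B ∧ w ∈ B))
    (hAB : Disjoint A B) {v : V} (hv : v ∈ A) :
    G.neighborSet v = Aᶜ := by
  ext w
  simp only [mem_neighborSet, hadj, Set.mem_compl_iff, hv, true_and,
    Set.disjoint_left.mp hAB hv, false_and, not_false_eq_true, and_true]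
  exact ⟨And.right, fun hw => ⟨fun h => hw (h ▸ hv), hw⟩⟩

theorem isUniversal_of_notMem
    (hadj : ∀ v w, G.Adj v w ↔ v ≠ w ∧ ¬(v ∈ A ∧ w ∈ A) ∧ ¬(v ∈ B ∧ w ∈ B))
    {v : V} (hvA : v ∉ A) (hvB : v ∉ B) : G.IsUniversal v :=
  fun w hw => (hadj v w).mpr ⟨hw, fun h => hvA h.1, fun h => hvB h.1⟩

theorem ncard_neighborSet_add_ite [Finite V]
    (hadj : ∀ v w, G.Adj v w ↔ v ≠ w ∧ ¬(v ∈ A ∧ w ∈ A) ∧ ¬(v ∈ B ∧ w ∈ B))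
    (hAB : Disjoint A B) (v : V) [Decidable (v ∈ A)] [Decidable (v ∈ B)] :
    (G.neighborSet v).ncard + (if v ∈ A then A.ncard - 1 else 0) +
      (if v ∈ B then B.ncard - 1 else 0) + 1 = Nat.card V := by
  by_cases hvA : v ∈ A
  · have := (Set.ncard_pos).mpr ⟨v, hvA⟩
    have := Set.ncard_add_ncard_compl A
    rw [neighborSet_eq_compl_of_mem_left hadj hAB hvA, if_pos hvA,
      if_neg (Set.disjoint_left.mp hAB hvA)]
    omega
  by_cases hvB : v ∈ B
  · have hadj' (v w : V) : G.Adj v w ↔ v ≠ w ∧ ¬(v ∈ B ∧ w ∈ B) ∧ ¬(v ∈ A ∧ w ∈ A) :=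
      (hadj v w).trans (and_congr_right fun _ => and_comm)
    have := (Set.ncard_pos).mpr ⟨v, hvB⟩
    have := Set.ncard_add_ncard_compl B
    rw [neighborSet_eq_compl_of_mem_left hadj' hAB.symm hvB, if_neg hvA, if_pos hvB]
    omega
  · have := (isUniversal_of_notMem hadj hvA hvB).ncard_neighborSet
    have : 0 < Nat.card V := Nat.card_pos_iff.mpr ⟨⟨v⟩, inferInstance⟩
    rw [if_neg hvA, if_neg hvB]
    omega

theorem two_mul_ncard_edgeSet_add [Finite V]
    (hadj : ∀ v w, G.Adj v w ↔ v ≠ w ∧ ¬(v ∈ A ∧ w ∈ A) ∧ ¬(v ∈ B ∧ w ∈ B))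
    (hAB : Disjoint A B) :
    2 * G.edgeSet.ncard + A.ncard * (A.ncard - 1) + B.ncard * (B.ncard - 1) =
      Nat.card V * (Nat.card V - 1) := by
  classical
  have := Fintype.ofFinite V
  have hconst (S : Set V) (c : ℕ) : ∑ v, (if v ∈ S then c else 0) = S.ncard * c := by
    simp [Finset.sum_ite, Set.ncard_eq_toFinset_card']
  have hsum := Finset.sum_congr rfl fun v (_ : v ∈ Finset.univ) =>
    ncard_neighborSet_add_ite hadj hAB v
  simp only [Finset.sum_add_distrib, sum_ncard_neighborSet, hconst, Finset.sum_const,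
    Finset.card_univ, smul_eq_mul, mul_one, ← Nat.card_eq_fintype_card] at hsum
  rw [Nat.mul_sub_one (Nat.card V), ← hsum]
  omega

end TwoCliqueComplement

end SimpleGraph

theorem div_two_mul_sub_one_lt_iff {t₁ t₂ n E : ℕ} (ht₁ : 2 ≤ t₁) (ht₂ : 2 ≤ t₂)
    (he₁ : Even t₁) (he₂ : Even t₂) (hn : n + 2 = (t₁ + 1) * (t₂ + 1))
    (hE : 2 * E + t₁ * (t₁ - 1) + t₂ * (t₂ - 1) = n * (n - 1)) :
    E > n / 2 * (n - 1) ↔ t₁ = 2 ∧ t₂ = 2 := by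
  obtain ⟨p, rfl⟩ : ∃ p, t₁ = 2 * p + 2 := ⟨t₁ / 2 - 1, by grind⟩
  obtain ⟨q, rfl⟩ : ∃ q, t₂ = 2 * q + 2 := ⟨t₂ / 2 - 1, by grind⟩
  obtain ⟨m, hm, rfl⟩ : ∃ m, m = 2 * p * q + 3 * p + 3 * q + 3 ∧ n = 2 * m + 1 :=
    ⟨_, rfl, by linarith⟩
  rw [show (2 * m + 1) / 2 = m by omega, Nat.add_sub_cancel]
  rw [Nat.add_sub_cancel, show 2 * p + 2 - 1 = 2 * p + 1 by omega,
    show 2 * q + 2 - 1 = 2 * q + 1 by omega] at hE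
  constructor
  · intro h
    have hpq : 2 * p * p + 2 * q * q ≤ 2 * p * q := by nlinarith
    zify at hpq
    have : (p : ℤ) = 0 ∧ (q : ℤ) = 0 := by constructor <;> nlinarith [sq_nonneg ((p : ℤ) - q)]
    omega
  · rintro ⟨hp, hq⟩
    obtain rfl : p = 0 := by omega
    obtain rfl : q = 0 := by omega
    subst hm
    omega

namespace AnnVertex

variable {R₁ R₂ : Type*} [CommRing R₁] [CommRing R₂]

def components (v : AnnVertex (R₁ × R₂)) : Ideal R₁ × Ideal R₂ :=
  Ideal.idealProdEquiv v.1

theorem prod_components (v : AnnVertex (R₁ × R₂)) :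
    v.components.1.prod v.components.2 = v.1 :=
  (Ideal.ideal_prod_eq v.1).symm

theorem components_injective : Function.Injective (components (R₁ := R₁) (R₂ := R₂)) :=
  Ideal.idealProdEquiv.injective.comp Subtype.val_injective

instance [Finite (Ideal R₁)] [Finite (Ideal R₂)] : Finite (AnnVertex (R₁ × R₂)) :=
  Finite.of_injective _ components_injective

variable [IsArtinianRing R₁] [IsLocalRing R₁] [IsArtinianRing R₂] [IsLocalRing R₂]

theorem range_components :
    Set.range (components (R₁ := R₁) (R₂ := R₂)) = {(⊥, ⊥), (⊤, ⊤)}ᶜ := by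
  ext ⟨I₁, I₂⟩
  simp only [Set.mem_range, Set.mem_compl_iff, Set.mem_insert_iff, Set.mem_singleton_iff, not_or]
  constructor
  · rintro ⟨v, hv⟩
    obtain ⟨hbot, hann⟩ := v.2
    rw [← v.prod_components, hv] at hbot hann
    rw [annihilator_prod_ne_bot_iff] at hann
    refine ⟨?_, hann⟩
    simpa using hbot
  · rintro ⟨hbot, htop⟩
    refine ⟨⟨I₁.prod I₂, by simpa using hbot, (annihilator_prod_ne_bot_iff I₁ I₂).mpr htop⟩, ?_⟩
    exact Ideal.idealProdEquiv.apply_symm_apply (I₁, I₂)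

theorem adj_iff (v w : AnnVertex (R₁ × R₂)) :
    (EG (R₁ × R₂)).Adj v w ↔ v ≠ w ∧ ¬(v.components.1 = ⊤ ∧ w.components.1 = ⊤) ∧
      ¬(v.components.2 = ⊤ ∧ w.components.2 = ⊤) := by
  have hmul : v.1 * w.1 =
      (v.components.1 * w.components.1).prod (v.components.2 * w.components.2) := by
    rw [← Ideal.prod_mul_prod, v.prod_components, w.prod_components]
  change v ≠ w ∧ IsEssentialIdeal _ (Submodule.annihilator (v.1 * w.1)) ↔ _
  rw [hmul, Ideal.annihilator_prod, isEssentialIdeal_prod_iff, isEssentialIdeal_annihilator_iff,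
    isEssentialIdeal_annihilator_iff]
  simp only [ne_eq, Ideal.mul_eq_top_iff]

theorem components_ne_top_top (v : AnnVertex (R₁ × R₂)) : v.components ≠ (⊤, ⊤) := by
  have : v.components ∈ Set.range components := ⟨v, rfl⟩
  rw [range_components] at this
  simp_all

theorem natCard_add_two [Finite (Ideal R₁)] [Finite (Ideal R₂)] :
    Nat.card (AnnVertex (R₁ × R₂)) + 2 = Nat.card (Ideal R₁) * Nat.card (Ideal R₂) := by
  rw [← Set.ncard_range_of_injective components_injective, range_components (R₁ := R₁) (R₂ := R₂),
    ← Nat.card_prod,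
    ← Set.ncard_pair (a := ((⊥, ⊥) : Ideal R₁ × Ideal R₂)) (b := (⊤, ⊤)) (by simp),
    add_comm, Set.ncard_add_ncard_compl]

theorem ncard_preimage_components {S : Set (Ideal R₁ × Ideal R₂)}
    (hS : S ⊆ {(⊥, ⊥), (⊤, ⊤)}ᶜ) : (components ⁻¹' S).ncard = S.ncard :=
  Set.ncard_preimage_of_injective_subset_range components_injective
    (range_components (R₁ := R₁) (R₂ := R₂) ▸ hS)

theorem ncard_setOf_fst_eq_top :
    {v : AnnVertex (R₁ × R₂) | v.components.1 = ⊤}.ncard = {I : Ideal R₂ | I ≠ ⊤}.ncard := by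
  have hpre : {v : AnnVertex (R₁ × R₂) | v.components.1 = ⊤} =
      components ⁻¹' ({⊤} ×ˢ {I | I ≠ ⊤}) := by
    ext v
    have := v.components_ne_top_top
    simp only [Set.mem_ofPred_eq, Set.mem_preimage, Set.mem_prod, Set.mem_singleton_iff]
    exact ⟨fun h => ⟨h, fun h' => this (Prod.ext h h')⟩, And.left⟩
  rw [hpre, ncard_preimage_components, Set.ncard_prod, Set.ncard_singleton, one_mul]
  rintro ⟨I₁, I₂⟩ ⟨rfl, hI₂⟩
  simp_all

theorem ncard_setOf_snd_eq_top :
    {v : AnnVertex (R₁ × R₂) | v.components.2 = ⊤}.ncard = {I : Ideal R₁ | I ≠ ⊤}.ncard := by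
  have hpre : {v : AnnVertex (R₁ × R₂) | v.components.2 = ⊤} =
      components ⁻¹' ({I | I ≠ ⊤} ×ˢ {⊤}) := by
    ext v
    have := v.components_ne_top_top
    simp only [Set.mem_ofPred_eq, Set.mem_preimage, Set.mem_prod, Set.mem_singleton_iff]
    exact ⟨fun h => ⟨fun h' => this (Prod.ext h' h), h⟩, And.right⟩
  rw [hpre, ncard_preimage_components, Set.ncard_prod, Set.ncard_singleton, mul_one]
  rintro ⟨I₁, I₂⟩ ⟨hI₁, rfl⟩
  simp_all

theorem two_mul_ncard_edgeSet_EG [Finite (AnnVertex (R₁ × R₂))] :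
    2 * (EG (R₁ × R₂)).edgeSet.ncard +
        {I : Ideal R₁ | I ≠ ⊤}.ncard * ({I : Ideal R₁ | I ≠ ⊤}.ncard - 1) +
        {I : Ideal R₂ | I ≠ ⊤}.ncard * ({I : Ideal R₂ | I ≠ ⊤}.ncard - 1) =
      Nat.card (AnnVertex (R₁ × R₂)) * (Nat.card (AnnVertex (R₁ × R₂)) - 1) := by
  have hAB : Disjoint {v : AnnVertex (R₁ × R₂) | v.components.1 = ⊤} {v | v.components.2 = ⊤} :=
    Set.disjoint_left.mpr fun v h₁ h₂ => v.components_ne_top_top (Prod.ext h₁ h₂)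
  have := SimpleGraph.two_mul_ncard_edgeSet_add (G := EG (R₁ × R₂))
    (A := {v | v.components.1 = ⊤}) (B := {v | v.components.2 = ⊤}) adj_iff hAB
  rw [ncard_setOf_fst_eq_top, ncard_setOf_snd_eq_top] at this
  linarith

theorem exists_isUniversal {I₁ : Ideal R₁} (h₀ : I₁ ≠ ⊥) (h₁ : I₁ ≠ ⊤) :
    ∃ u : AnnVertex (R₁ × R₂), (EG (R₁ × R₂)).IsUniversal u := by
  obtain ⟨u, hu⟩ : (I₁, ⊥) ∈ Set.range (components (R₁ := R₁) (R₂ := R₂)) := by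
    rw [range_components]
    simp [h₀, h₁]
  exact ⟨u, fun w hw => (adj_iff u w).mpr ⟨hw, by simp [hu, h₁], by simp [hu]⟩⟩

end AnnVertex

theorem overfull_iff_two_two (R₁ R₂ : Type*) [CommRing R₁] [CommRing R₂]
    [IsArtinianRing R₁] [IsLocalRing R₁] [IsArtinianRing R₂] [IsLocalRing R₂]
    (t₁ t₂ : ℕ) (ht₁ : 2 ≤ t₁) (ht₂ : 2 ≤ t₂) (he₁ : Even t₁) (he₂ : Even t₂)
    (hc₁ : {I : Ideal R₁ | I ≠ ⊤}.ncard = t₁)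
    (hc₂ : {I : Ideal R₂ | I ≠ ⊤}.ncard = t₂)
    (d : ℕ)
    (hdle : ∀ v : AnnVertex (R₁ × R₂), ((EG (R₁ × R₂)).neighborSet v).ncard ≤ d)
    (hdeq : ∃ v : AnnVertex (R₁ × R₂), ((EG (R₁ × R₂)).neighborSet v).ncard = d) :
    ((EG (R₁ × R₂)).edgeSet.ncard >
        (Set.univ : Set (AnnVertex (R₁ × R₂))).ncard / 2 * d) ↔
      (t₁ = 2 ∧ t₂ = 2) := by
  have := Ideal.finite_of_ncard_setOf_ne_top_ne_zero (R := R₁) (by omega)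
  have := Ideal.finite_of_ncard_setOf_ne_top_ne_zero (R := R₂) (by omega)
  have hn : Nat.card (AnnVertex (R₁ × R₂)) + 2 = (t₁ + 1) * (t₂ + 1) := by
    rw [AnnVertex.natCard_add_two, Ideal.natCard_eq_ncard_setOf_ne_top_add_one,
      Ideal.natCard_eq_ncard_setOf_ne_top_add_one, hc₁, hc₂]
  have hE := AnnVertex.two_mul_ncard_edgeSet_EG (R₁ := R₁) (R₂ := R₂)
  rw [hc₁, hc₂] at hE
  obtain ⟨I₁, hI₁, hI₁₀⟩ := Set.exists_ne_of_one_lt_ncard (hc₁ ▸ ht₁ : 1 < _) ⊥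
  obtain ⟨u, hu⟩ := AnnVertex.exists_isUniversal (R₂ := R₂) hI₁₀ hI₁
  rw [Set.ncard_univ, SimpleGraph.eq_natCard_sub_one_of_isUniversal hdle hdeq hu]
  exact div_two_mul_sub_one_lt_iff ht₁ ht₂ he₁ he₂ hn hE
end
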